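/- arXiv:2601.01166 — 5 statements merged into one kernel-verified Lean document; each statement's English description precedes it below -/
import Mathlib

section
/- If f : ℝ ⇀ ℝ is an increasing injective partial function without fixed points, F is the closure of its graph in ℝ², and D = {x : (x,x) ∉ F, there is a unique y with (x,y) ∈ F, and for all x' < x, (x,y) ∈ F implies (x',y) ∉ F}, then dom(f) \ D is at most countable. -/
/-!
A monotone function on `D` is continuous within `D` outside a countable set, and only
countably many points of `D` are isolated from the left in `D`. At a remaining point `x`,
continuity forces `(x, f x)` to be the only point of the graph closure above `x`, and for
`x' < x` some `t ∈ D` lies in `(x', x)`: the graph left of `t` stays below height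
`f t < f x`, so its closure misses `(x', f x)`.
-/

open Set Filter Topology

theorem ContinuousWithinAt.eq_of_mem_closure_graphOn {α β : Type*} [TopologicalSpace α]
    [TopologicalSpace β] [T2Space β] {f : α → β} {s : Set α} {x : α} {y : β}
    (hf : ContinuousWithinAt f s x) (hy : (x, y) ∈ closure (s.graphOn f)) : y = f x := by
  have := mem_closure_iff_nhdsWithin_neBot.1 hy
  have hfst : Tendsto Prod.fst (𝓝[s.graphOn f] (x, y)) (𝓝[s] x) :=
    tendsto_nhdsWithin_of_tendsto_nhds_of_eventually_within _
      (continuous_fst.continuousWithinAt.tendsto)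
      (eventually_nhdsWithin_of_forall fun p hp => (mem_graphOn.1 hp).1)
  have hsnd : Tendsto (f ∘ Prod.fst) (𝓝[s.graphOn f] (x, y)) (𝓝 y) :=
    (continuous_snd.continuousWithinAt.tendsto).congr'
      (eventually_nhdsWithin_of_forall fun p hp => (mem_graphOn.1 hp).2.symm)
  exact tendsto_nhds_unique hsnd (hf.tendsto.comp hfst)

theorem MonotoneOn.le_of_mem_closure_graphOn {α β : Type*} [TopologicalSpace α] [LinearOrder α]
    [ClosedIciTopology α] [TopologicalSpace β] [Preorder β] [ClosedIicTopology β]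
    {f : α → β} {s : Set α} {t x : α} {y : β} (hf : MonotoneOn f s) (ht : t ∈ s) (hxt : x < t)
    (hy : (x, y) ∈ closure (s.graphOn f)) : y ≤ f t := by
  have hsub : s.graphOn f ⊆ Prod.fst ⁻¹' Ici t ∪ Prod.snd ⁻¹' Iic (f t) := by
    rintro _ ⟨a, ha, rfl⟩
    rcases le_or_gt t a with hta | hat
    · exact Or.inl hta
    · exact Or.inr (hf ha ht hat.le)
  have hclosed : IsClosed (Prod.fst ⁻¹' Ici t ∪ Prod.snd ⁻¹' Iic (f t)) :=
    (isClosed_Ici.preimage continuous_fst).union (isClosed_Iic.preimage continuous_snd)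
  exact (closure_minimal hsub hclosed hy).resolve_left hxt.not_ge

theorem StrictMonoOn.notMem_closure_graphOn_of_lt {α β : Type*} [TopologicalSpace α]
    [LinearOrder α] [OrderTopology α] [TopologicalSpace β] [LinearOrder β] [OrderTopology β]
    {f : α → β} {s : Set α} {x x' : α} {y : β} (hf : StrictMonoOn f s) (hx : x ∈ s)
    (hcont : ContinuousWithinAt f s x) (hleft : (𝓝[s ∩ Iio x] x).NeBot) (hx'x : x' < x)
    (hy : (x, y) ∈ closure (s.graphOn f)) : (x', y) ∉ closure (s.graphOn f) := by
  intro hx'y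
  obtain ⟨t, ⟨ht, htx⟩, hx't⟩ : ∃ t, t ∈ s ∩ Iio x ∧ x' < t :=
    hleft.nonempty_of_mem (inter_mem_nhdsWithin _ (Ioi_mem_nhds hx'x))
  have hyx : y = f x := hcont.eq_of_mem_closure_graphOn hy
  have hyt : y ≤ f t := hf.monotoneOn.le_of_mem_closure_graphOn ht hx't hx'y
  exact (hf ht hx htx).not_ge (hyx ▸ hyt)

/-- If `f` is an increasing injective partial real function without fixed points,
`F` is the closure of its graph, and `D'` is the set of `x` with `(x,x) ∉ F`, a
unique `y` with `(x,y) ∈ F`, and no `x' < x` with `(x',y) ∈ F` for such `y`,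
then `dom(f) \ D'` is at most countable. -/
theorem dom_diff_countable
    (f : ℝ → ℝ) (D : Set ℝ)
    (hmono : MonotoneOn f D)
    (hinj : Set.InjOn f D)
    (hnofix : ∀ x ∈ D, f x ≠ x)
    (F : Set (ℝ × ℝ)) (hF : F = closure {p : ℝ × ℝ | p.1 ∈ D ∧ p.2 = f p.1})
    (D' : Set ℝ)
    (hD' : D' = {x : ℝ | (x, x) ∉ F ∧ (∃! y, (x, y) ∈ F) ∧
      ∀ x' y : ℝ, x' < x → (x, y) ∈ F → (x', y) ∉ F}) :
    (D \ D').Countable := by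
  have hFD : F = closure (D.graphOn f) := by
    rw [hF]; congr 1; ext p; simp [eq_comm]
  refine (hmono.countable_not_continuousWithinAt.union
    (countable_setOfPred_isolated_left_within (s := D))).mono ?_
  rintro x ⟨hxD, hxD'⟩
  by_contra hbad
  simp only [mem_union, mem_ofPred_eq, not_or, not_and, not_not, ← neBot_iff] at hbad
  have hcont := hbad.1 hxD
  have hleft := hbad.2 hxD
  have hfiber : ∀ y, (x, y) ∈ F → y = f x := fun y hy =>
    hcont.eq_of_mem_closure_graphOn (hFD ▸ hy)
  refine hxD' (hD' ▸ ⟨fun hxx => hnofix x hxD (hfiber x hxx).symm,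
    ⟨f x, hFD ▸ subset_closure (mem_graphOn.2 ⟨hxD, rfl⟩), hfiber⟩, fun x' y hx'x hy => ?_⟩)
  rw [hFD] at hy ⊢
  exact (hmono.strictMonoOn_of_injOn hinj).notMem_closure_graphOn_of_lt hxD hcont hleft hx'x hy
end

section
/- Every entangled set of reals is an increasing set. -/
/-- `E` is `n`-entangled. -/
def NEntangled (n : ℕ) (E : Set ℝ) : Prop :=
  ¬ E.Countable ∧
  ∀ F : Set (Fin n → ℝ),
    (∀ x ∈ F, StrictMono x ∧ ∀ i, x i ∈ E) →
    (∀ x ∈ F, ∀ y ∈ F, x ≠ y → ∀ i j, x i ≠ y j) →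
    ¬ F.Countable →
    ∀ t : Fin n → Fin 2,
      ∃ x ∈ F, ∃ y ∈ F, x ≠ y ∧ ∀ i, (x i < y i ↔ t i = 0)

/-- `E` is entangled: `n`-entangled for every positive integer `n`. -/
def Entangled (E : Set ℝ) : Prop := ∀ n : ℕ, 1 ≤ n → NEntangled n E

/-- `I` is an increasing set: `I` is uncountable and for every positive `n` and
every uncountable family `F` of pairwise disjoint `n`-tuples from `I`, there are
distinct `x, y ∈ F` with `x i < y i` for all `i`. -/
def IncreasingSet (I : Set ℝ) : Prop :=
  ¬ I.Countable ∧
  ∀ n : ℕ, 1 ≤ n → ∀ F : Set (Fin n → ℝ),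
    (∀ x ∈ F, ∀ i, x i ∈ I) →
    (∀ x ∈ F, ∀ y ∈ F, x ≠ y → ∀ i j, x i ≠ y j) →
    ¬ F.Countable →
    ∃ x ∈ F, ∃ y ∈ F, x ≠ y ∧ ∀ i, x i < y i

/-!
Every tuple `x : Fin n → ℝ` factors as `s ∘ σ` with `σ : Fin n → Fin k` surjective (its order
pattern) and `s` strictly increasing (its distinct values, sorted). There are only countably many
patterns, so uncountably many tuples of the family share one pattern `σ`. Their increasing factors
form an uncountable family of pairwise disjoint increasing `k`-tuples from `E`, and `k`-entanglement
with the constant type `t = 0` yields two of them, `s` and `s'`, with `s < s'` coordinatewise;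
then `s ∘ σ < s' ∘ σ` coordinatewise as well.
-/

open Function Set

section

variable {α : Type*} [LinearOrder α] {n : ℕ}

theorem exists_surjective_strictMono_comp (x : Fin n → α) :
    ∃ k, ∃ σ : Fin n → Fin k, Surjective σ ∧ ∃ s : Fin k → α, StrictMono s ∧ s ∘ σ = x := by
  classical
  set S := Finset.univ.image x
  have hS : ∀ i, x i ∈ S := fun i => Finset.mem_image_of_mem x (Finset.mem_univ i)
  let σ i := (S.orderIsoOfFin rfl).symm ⟨x i, hS i⟩
  have hσ : ∀ i, S.orderEmbOfFin rfl (σ i) = x i := fun i => by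
    rw [← Finset.coe_orderIsoOfFin_apply, OrderIso.apply_symm_apply]
  refine ⟨S.card, σ, fun j => ?_, S.orderEmbOfFin rfl, (S.orderEmbOfFin rfl).strictMono, funext hσ⟩
  obtain ⟨i, -, hi⟩ := Finset.mem_image.mp (S.orderEmbOfFin_mem rfl j)
  exact ⟨i, (S.orderEmbOfFin rfl).injective (by rw [hσ, hi])⟩

theorem exists_not_countable_strictMono_comp {F : Set (Fin n → α)} (hF : ¬ F.Countable) :
    ∃ k, ∃ σ : Fin n → Fin k, Surjective σ ∧
      ¬ {x ∈ F | ∃ s : Fin k → α, StrictMono s ∧ s ∘ σ = x}.Countable := by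
  have hcover : F = ⋃ p : Σ k, Fin n → Fin k,
      {x ∈ F | Surjective p.2 ∧ ∃ s : Fin p.1 → α, StrictMono s ∧ s ∘ p.2 = x} := by
    ext x
    simp only [mem_iUnion, mem_ofPred_eq, Sigma.exists]
    refine ⟨fun hx => ?_, fun ⟨_, _, hx, _⟩ => hx⟩
    obtain ⟨k, σ, hσ, hs⟩ := exists_surjective_strictMono_comp x
    exact ⟨k, σ, hx, hσ, hs⟩
  rw [hcover, countable_iUnion_iff] at hF
  push Not at hF
  obtain ⟨⟨k, σ⟩, hp⟩ := hF
  have hσ : Surjective σ := by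
    by_contra hσ
    simp [hσ] at hp
  refine ⟨k, σ, hσ, fun hc => hp (hc.mono ?_)⟩
  exact fun x hx => ⟨hx.1, hx.2.2⟩

end

theorem NEntangled.exists_lt_of_strictMono_comp {k n : ℕ} {E : Set ℝ} (hE : NEntangled k E)
    {σ : Fin n → Fin k} (hσ : Surjective σ) {G : Set (Fin n → ℝ)} (hG : ¬ G.Countable)
    (hGE : ∀ x ∈ G, ∀ i, x i ∈ E) (hGd : ∀ x ∈ G, ∀ y ∈ G, x ≠ y → ∀ i j, x i ≠ y j)
    (hGσ : ∀ x ∈ G, ∃ s : Fin k → ℝ, StrictMono s ∧ s ∘ σ = x) :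
    ∃ x ∈ G, ∃ y ∈ G, x ≠ y ∧ ∀ i, x i < y i := by
  set factor : (Fin n → ℝ) → Fin k → ℝ := fun x => x ∘ surjInv hσ
  have hfactor : ∀ x ∈ G, StrictMono (factor x) ∧ factor x ∘ σ = x := by
    intro x hx
    obtain ⟨s, hs, rfl⟩ := hGσ x hx
    have : factor (s ∘ σ) = s := funext fun j => congrArg s (surjInv_eq hσ j)
    rw [this]
    exact ⟨hs, rfl⟩
  have hinj : InjOn factor G := fun x hx y hy hxy => by
    rw [← (hfactor x hx).2, ← (hfactor y hy).2, hxy]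
  obtain ⟨_, ⟨x, hx, rfl⟩, _, ⟨y, hy, rfl⟩, hxy, hlt⟩ := hE.2 (factor '' G)
    (by rintro _ ⟨x, hx, rfl⟩; exact ⟨(hfactor x hx).1, fun j => hGE x hx _⟩)
    (by rintro _ ⟨x, hx, rfl⟩ _ ⟨y, hy, rfl⟩ hne i j
        exact hGd x hx y hy (fun h => hne (h ▸ rfl)) _ _)
    (fun hc => hG (countable_of_injective_of_countable_image hinj hc)) 0
  refine ⟨x, hx, y, hy, fun h => hxy (h ▸ rfl), fun i => ?_⟩
  rw [← (hfactor x hx).2, ← (hfactor y hy).2]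
  exact (hlt (σ i)).2 rfl

/-- Every entangled set of reals is an increasing set. -/
theorem entangled_increasing (E : Set ℝ) (h : Entangled E) : IncreasingSet E := by
  refine ⟨(h 1 le_rfl).1, fun n hn F hFE hFd hFc => ?_⟩
  obtain ⟨k, σ, hσ, hG⟩ := exists_not_countable_strictMono_comp hFc
  have hk : 1 ≤ k := Fin.pos (σ ⟨0, hn⟩)
  obtain ⟨x, hx, y, hy, hxy, hlt⟩ := (h k hk).exists_lt_of_strictMono_comp hσ hG
    (fun x hx => hFE x hx.1) (fun x hx y hy => hFd x hx.1 y hy.1) (fun x hx => hx.2)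
  exact ⟨x, hx.1, y, hy.1, hxy, hlt⟩
end

section
/- If E ⊆ ℝ is a 2-entangled set, then every injective monotone partial function f : E ⇀ E without fixed points has at most countable domain. -/
lemma strictMono_pair {a b : ℝ} (h : a < b) : StrictMono ![a, b] := by
  intro i j hij
  fin_cases i <;> fin_cases j <;> simp_all

lemma entangled_pairs (E : Set ℝ) (hE : NEntangled 2 E) (g₀ g₁ : ℝ → ℝ) (S : Set ℝ)
    (q : ℝ)
    (hlt : ∀ x ∈ S, g₀ x < q ∧ q < g₁ x)
    (hmem : ∀ x ∈ S, g₀ x ∈ E ∧ g₁ x ∈ E)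
    (hinj0 : Set.InjOn g₀ S) (hinj1 : Set.InjOn g₁ S)
    (hS : ¬ S.Countable) (t : Fin 2 → Fin 2) :
    ∃ x ∈ S, ∃ y ∈ S, x ≠ y ∧ (g₀ x < g₀ y ↔ t 0 = 0) ∧ (g₁ x < g₁ y ↔ t 1 = 0) := by
  set g : ℝ → (Fin 2 → ℝ) := fun x => ![g₀ x, g₁ x] with hg
  have hginj : Set.InjOn g S := by
    intro x hx y hy hxy
    apply hinj0 hx hy
    have := congrFun hxy 0
    simpa [hg] using this
  set F : Set (Fin 2 → ℝ) := g '' S with hF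
  have hF1 : ∀ u ∈ F, StrictMono u ∧ ∀ i, u i ∈ E := by
    rintro u ⟨x, hx, rfl⟩
    constructor
    · exact strictMono_pair ((hlt x hx).1.trans (hlt x hx).2)
    · intro i
      fin_cases i <;> simp [hg, (hmem x hx).1, (hmem x hx).2]
  have hF2 : ∀ u ∈ F, ∀ v ∈ F, u ≠ v → ∀ i j, u i ≠ v j := by
    rintro u ⟨x, hx, rfl⟩ v ⟨y, hy, rfl⟩ huv i j
    have hxy : x ≠ y := by rintro rfl; exact huv rfl
    fin_cases i <;> fin_cases j <;> simp [hg]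
    · exact fun h => hxy (hinj0 hx hy h)
    · exact ne_of_lt ((hlt x hx).1.trans (hlt y hy).2)
    · exact ne_of_gt ((hlt y hy).1.trans (hlt x hx).2)
    · exact fun h => hxy (hinj1 hx hy h)
  have hFc : ¬ F.Countable := by
    intro hc
    exact hS (Set.countable_of_injective_of_countable_image hginj hc)
  obtain ⟨u, hu, v, hv, huv, hcmp⟩ := hE.2 F hF1 hF2 hFc t
  obtain ⟨x, hx, rfl⟩ := hu
  obtain ⟨y, hy, rfl⟩ := hv
  have hxy : x ≠ y := by rintro rfl; exact huv rfl
  refine ⟨x, hx, y, hy, hxy, ?_, ?_⟩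
  · simpa [hg] using hcmp 0
  · simpa [hg] using hcmp 1

/-- If `E` is `2`-entangled, every injective monotone partial function
`f : E ⇀ E` without fixed points has at most countable domain. -/
theorem two_entangled_no_witness (E : Set ℝ) (hE : NEntangled 2 E)
    (f : ℝ → ℝ) (D : Set ℝ)
    (hD : D ⊆ E) (hrange : ∀ x ∈ D, f x ∈ E)
    (hinj : Set.InjOn f D)
    (hmono : MonotoneOn f D ∨ AntitoneOn f D)
    (hnofix : ∀ x ∈ D, f x ≠ x) :
    D.Countable := by
  by_contra hD'
  set S : ℚ → Set ℝ := fun q => {x ∈ D | x < q ∧ (q : ℝ) < f x} with hSdef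
  set T : ℚ → Set ℝ := fun q => {x ∈ D | f x < q ∧ (q : ℝ) < x} with hTdef
  have hcover : D ⊆ (⋃ q, S q) ∪ (⋃ q, T q) := by
    intro x hx
    rcases lt_or_gt_of_ne (hnofix x hx) with h | h
    · obtain ⟨q, hq1, hq2⟩ := exists_rat_btwn h
      exact Or.inr (Set.mem_iUnion.mpr ⟨q, hx, hq1, hq2⟩)
    · obtain ⟨q, hq1, hq2⟩ := exists_rat_btwn h
      exact Or.inl (Set.mem_iUnion.mpr ⟨q, hx, hq1, hq2⟩)
  have hbig : (∃ q, ¬ (S q).Countable) ∨ (∃ q, ¬ (T q).Countable) := by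
    by_contra h
    push_neg at h
    obtain ⟨h1, h2⟩ := h
    exact hD' (((Set.countable_iUnion h1).union (Set.countable_iUnion h2)).mono hcover)
  rcases hbig with ⟨q, hq⟩ | ⟨q, hq⟩
  · -- x < q < f x on S q; use pairs (x, f x)
    have hsub : S q ⊆ D := fun x hx => hx.1
    have hlt : ∀ x ∈ S q, id x < (q : ℝ) ∧ (q : ℝ) < f x := fun x hx => hx.2
    have hmem : ∀ x ∈ S q, id x ∈ E ∧ f x ∈ E := fun x hx =>
      ⟨hD (hsub hx), hrange x (hsub hx)⟩
    have hinj0 : Set.InjOn id (S q) := fun x _ y _ h => h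
    have hinj1 : Set.InjOn f (S q) := hinj.mono hsub
    rcases hmono with hm | hm
    · obtain ⟨x, hx, y, hy, hxy, h0, h1⟩ :=
        entangled_pairs E hE id f (S q) q hlt hmem hinj0 hinj1 hq ![0, 1]
      simp only [Matrix.cons_val_zero, Matrix.cons_val_one, Matrix.head_cons, id] at h0 h1
      have hxy' : x < y := by simpa using h0
      have hfle : f x ≤ f y := hm (hsub hx) (hsub hy) hxy'.le
      have hfne : f x ≠ f y := fun h => hxy (hinj1 hx hy h)
      have : f x < f y := lt_of_le_of_ne hfle hfne
      simp_all
    · obtain ⟨x, hx, y, hy, hxy, h0, h1⟩ :=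
        entangled_pairs E hE id f (S q) q hlt hmem hinj0 hinj1 hq ![0, 0]
      simp only [Matrix.cons_val_zero, Matrix.cons_val_one, Matrix.head_cons, id] at h0 h1
      have hxy' : x < y := by simpa using h0
      have hf : f x < f y := by simpa using h1
      have : f y ≤ f x := hm (hsub hx) (hsub hy) hxy'.le
      linarith
  · -- f x < q < x on T q; use pairs (f x, x)
    have hsub : T q ⊆ D := fun x hx => hx.1
    have hlt : ∀ x ∈ T q, f x < (q : ℝ) ∧ (q : ℝ) < id x := fun x hx => hx.2
    have hmem : ∀ x ∈ T q, f x ∈ E ∧ id x ∈ E := fun x hx =>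
      ⟨hrange x (hsub hx), hD (hsub hx)⟩
    have hinj0 : Set.InjOn f (T q) := hinj.mono hsub
    have hinj1 : Set.InjOn id (T q) := fun x _ y _ h => h
    rcases hmono with hm | hm
    · obtain ⟨x, hx, y, hy, hxy, h0, h1⟩ :=
        entangled_pairs E hE f id (T q) q hlt hmem hinj0 hinj1 hq ![0, 1]
      simp only [Matrix.cons_val_zero, Matrix.cons_val_one, Matrix.head_cons, id] at h0 h1
      have hf : f x < f y := by simpa using h0
      have hnxy : ¬ x < y := by simpa using h1
      have hyx : y < x := lt_of_le_of_ne (not_lt.mp hnxy) hxy.symm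
      have : f y ≤ f x := hm (hsub hy) (hsub hx) hyx.le
      linarith
    · obtain ⟨x, hx, y, hy, hxy, h0, h1⟩ :=
        entangled_pairs E hE f id (T q) q hlt hmem hinj0 hinj1 hq ![0, 0]
      simp only [Matrix.cons_val_zero, Matrix.cons_val_one, Matrix.head_cons, id] at h0 h1
      have hf : f x < f y := by simpa using h0
      have hxy' : x < y := by simpa using h1
      have : f y ≤ f x := hm (hsub hx) (hsub hy) hxy'.le
      linarith
end

section
/- If I ⊆ ℝ is an increasing set, then every injective decreasing partial function f : I ⇀ I without fixed points has at most countable domain. -/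
/-- If `I` is an increasing set, every injective decreasing partial function
`f : I ⇀ I` without fixed points has at most countable domain. -/
theorem increasing_set_no_decreasing_witness (I : Set ℝ) (hI : IncreasingSet I)
    (f : ℝ → ℝ) (D : Set ℝ)
    (hD : D ⊆ I) (hrange : ∀ x ∈ D, f x ∈ I)
    (hinj : Set.InjOn f D)
    (hdec : AntitoneOn f D)
    (hnofix : ∀ x ∈ D, f x ≠ x) :
    D.Countable := by
  by_contra hDc
  -- good sets: subsets of D with pairwise disjoint pairs (x, f x)
  set S : Set (Set ℝ) := {M | M ⊆ D ∧ ∀ x ∈ M, ∀ y ∈ M, x ≠ y → f x ≠ y} with hS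
  obtain ⟨M, hM⟩ : ∃ m, Maximal (· ∈ S) m := by
    apply zorn_subset
    intro c hcS hchain
    refine ⟨⋃₀ c, ⟨?_, ?_⟩, fun s hs => Set.subset_sUnion_of_mem hs⟩
    · intro x hx
      obtain ⟨s, hs, hxs⟩ := hx
      exact (hcS hs).1 hxs
    · rintro x ⟨s, hs, hxs⟩ y ⟨t, ht, hyt⟩ hxy
      rcases hchain.total hs ht with h | h
      · exact (hcS ht).2 x (h hxs) y hyt hxy
      · exact (hcS hs).2 x hxs y (h hyt) hxy
  have hMD := hM.prop.1
  have hMgood := hM.prop.2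
  -- M is uncountable, else D would be countable
  have hMc : ¬ M.Countable := by
    intro hMcnt
    apply hDc
    have hsub : D ⊆ M ∪ (f '' M) ∪ (D ∩ f ⁻¹' M) := by
      intro x hxD
      by_cases hxM : x ∈ M
      · exact Or.inl (Or.inl hxM)
      -- M ∪ {x} is not good by maximality
      have hbad : ¬ (insert x M ∈ S) := by
        intro hgood
        exact hxM (hM.mem_of_prop_insert hgood)
      simp only [hS, Set.mem_setOf_eq, not_and] at hbad
      have h1 : insert x M ⊆ D := Set.insert_subset hxD hMD
      push_neg at hbad
      obtain ⟨a, ha, b, hb, hab, hfab⟩ := hbad h1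
      rcases Set.mem_insert_iff.1 ha with rfl | haM
      · rcases Set.mem_insert_iff.1 hb with rfl | hbM
        · exact absurd rfl hab
        · exact Or.inr ⟨hxD, by rw [Set.mem_preimage, hfab]; exact hbM⟩
      · rcases Set.mem_insert_iff.1 hb with rfl | hbM
        · exact Or.inl (Or.inr ⟨a, haM, hfab⟩)
        · exact absurd hfab (hMgood a haM b hbM hab)
    apply Set.Countable.mono hsub
    refine ((hMcnt.union (hMcnt.image f)).union ?_)
    exact Set.MapsTo.countable_of_injOn (f := f) (fun x hx => hx.2)
      (hinj.mono (Set.inter_subset_left)) hMcnt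
  -- build the family of pairs
  set F : Set (Fin 2 → ℝ) := (fun x => ![x, f x]) '' M with hF
  have hmem : ∀ p ∈ F, ∀ i, p i ∈ I := by
    rintro p ⟨x, hxM, rfl⟩ i
    fin_cases i
    · exact hD (hMD hxM)
    · exact hrange x (hMD hxM)
  have hdisj : ∀ p ∈ F, ∀ q ∈ F, p ≠ q → ∀ i j, p i ≠ q j := by
    rintro p ⟨x, hxM, rfl⟩ q ⟨y, hyM, rfl⟩ hpq i j
    have hxy : x ≠ y := by rintro rfl; exact hpq rfl
    fin_cases i <;> fin_cases j <;> simp only [Matrix.cons_val_zero, Matrix.cons_val_one,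
      Matrix.head_cons]
    · exact hxy
    · exact fun h => hMgood y hyM x hxM hxy.symm h.symm
    · exact hMgood x hxM y hyM hxy
    · exact fun h => hxy (hinj (hMD hxM) (hMD hyM) h)
  have hFc : ¬ F.Countable := by
    intro hFcnt
    apply hMc
    refine Set.MapsTo.countable_of_injOn (f := fun x => ![x, f x]) (t := F) (fun x hx => ⟨x, hx, rfl⟩) ?_ hFcnt
    intro a _ b _ hab
    have := congrFun hab 0
    simpa using this
  obtain ⟨p, hp, q, hq, hpq, hlt⟩ := hI.2 2 (by norm_num) F hmem hdisj hFc
  obtain ⟨x, hxM, rfl⟩ := hp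
  obtain ⟨y, hyM, rfl⟩ := hq
  have h0 := hlt 0
  have h1 := hlt 1
  simp only [Matrix.cons_val_zero, Matrix.cons_val_one, Matrix.head_cons] at h0 h1
  have := hdec (hMD hxM) (hMD hyM) h0.le
  linarith
end

section
/- Let ⟨e_ξ : ξ < ω₁⟩ be a nonstationarily 2-entangled sequence with range E. Then E is not reversible; that is, there is no order isomorphism between E and E* = {−x : x ∈ E}. -/
/-- The first uncountable ordinal. -/
noncomputable def omega1 : Ordinal := (Cardinal.aleph 1).ord

/-- `C` is a club in `ω₁`. -/
def IsClubIn (C : Set Ordinal) : Prop :=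
  C ⊆ Set.Iio omega1 ∧
  (∀ s : Set Ordinal, s ⊆ C → s.Nonempty → sSup s < omega1 → sSup s ∈ C) ∧
  (∀ a < omega1, ∃ b ∈ C, a ≤ b)

/-- `S` is stationary in `ω₁`. -/
def IsStationaryIn (S : Set Ordinal) : Prop :=
  S ⊆ Set.Iio omega1 ∧ ∀ C : Set Ordinal, IsClubIn C → (S ∩ C).Nonempty

/-- `A ⊆ ℝ` is `ℵ₁`-dense: it has cardinality `ℵ₁`, no endpoints, and between any
two distinct elements of `A` there are `ℵ₁`-many elements of `A`. -/
def Aleph1Dense (A : Set ℝ) : Prop :=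
  Cardinal.mk A = Cardinal.aleph 1 ∧
  (∀ x ∈ A, (∃ y ∈ A, y < x) ∧ (∃ y ∈ A, x < y)) ∧
  ∀ x ∈ A, ∀ y ∈ A, x < y → Cardinal.mk ↥(A ∩ Set.Ioo x y) = Cardinal.aleph 1

/-- `e : ω₁ → ℝ` is a nonstationarily `2`-entangled sequence: `e` is injective on
`ω₁`, its range `E` is `ℵ₁`-dense, and for every injective monotone partial
function `f : E ⇀ E` (with domain `D`) without fixed points, the set
`{ξ < ω₁ : e ξ ∈ D}` is nonstationary. -/
def NonstatEntangled (e : Ordinal → ℝ) : Prop :=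
  Set.InjOn e (Set.Iio omega1) ∧
  Aleph1Dense (e '' Set.Iio omega1) ∧
  ∀ (D : Set ℝ) (f : ℝ → ℝ),
    D ⊆ e '' Set.Iio omega1 → (∀ x ∈ D, f x ∈ e '' Set.Iio omega1) →
    Set.InjOn f D → (MonotoneOn f D ∨ AntitoneOn f D) →
    (∀ x ∈ D, f x ≠ x) →
    ¬ IsStationaryIn {ξ : Ordinal | ξ < omega1 ∧ e ξ ∈ D}


/-! A reversal `g : E ≅ E*` yields the strictly decreasing self-map `x ↦ -g x` of `E`. Being
decreasing, it has at most one fixed point, so its restriction to the non-fixed points is an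
injective monotone partial map without fixed points whose domain misses at most one point of
`E`, and such a domain is stationary because every club in `ω₁` has at least two elements. -/

theorem StrictAntiOn.eq_of_isFixedPt {α : Type*} [LinearOrder α] {f : α → α} {s : Set α}
    (hf : StrictAntiOn f s) {x y : α} (hx : x ∈ s) (hy : y ∈ s)
    (hfx : Function.IsFixedPt f x) (hfy : Function.IsFixedPt f y) : x = y := by
  by_contra hne
  rcases lt_or_gt_of_ne hne with hxy | hyx
  · have := hf hx hy hxy
    rw [hfx, hfy] at this
    exact lt_asymm hxy this
  · have := hf hy hx hyx
    rw [hfx, hfy] at this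
    exact lt_asymm hyx this

theorem IsClubIn.nontrivial {C : Set Ordinal} (hC : IsClubIn C) : C.Nontrivial := by
  obtain ⟨hCsub, -, hCunb⟩ := hC
  have hlim : Order.IsSuccLimit omega1 := Cardinal.isSuccLimit_ord (Cardinal.aleph0_le_aleph 1)
  obtain ⟨a, haC, -⟩ := hCunb 0 hlim.bot_lt
  obtain ⟨b, hbC, hab⟩ := hCunb (Order.succ a) (hlim.succ_lt (hCsub haC))
  exact ⟨a, haC, b, hbC, ((Order.lt_succ a).trans_le hab).ne⟩

theorem isStationaryIn_of_subsingleton_diff {S : Set Ordinal} (hS : S ⊆ Set.Iio omega1)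
    (hdiff : (Set.Iio omega1 \ S).Subsingleton) : IsStationaryIn S := by
  refine ⟨hS, fun C hC => ?_⟩
  by_contra hempty
  refine hC.nontrivial.not_subsingleton (hdiff.anti fun ξ hξ => ⟨hC.1 hξ, fun hξS => ?_⟩)
  exact hempty ⟨ξ, hξS, hξ⟩

/-- The range `E` of a nonstationarily `2`-entangled sequence is not reversible:
there is no order isomorphism between `E` and `E* = {-x : x ∈ E}`. -/
theorem nonstat_entangled_not_reversible (e : Ordinal → ℝ)
    (h : NonstatEntangled e) :
    ¬ ∃ g : ℝ → ℝ,
      Set.BijOn g (e '' Set.Iio omega1) ((fun x : ℝ => -x) '' (e '' Set.Iio omega1)) ∧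
      ∀ x ∈ e '' Set.Iio omega1, ∀ y ∈ e '' Set.Iio omega1, x < y → g x < g y := by
  rintro ⟨g, hbij, hmono⟩
  obtain ⟨he, -, hentangled⟩ := h
  set E := e '' Set.Iio omega1
  set f : ℝ → ℝ := fun x => -g x
  have hf_anti : StrictAntiOn f E := StrictMonoOn.neg fun x hx y hy hxy => hmono x hx y hy hxy
  have hf_maps : ∀ x ∈ E, f x ∈ E := fun x hx => by
    obtain ⟨y, hy, hyx⟩ := hbij.mapsTo hx
    simpa [f, ← hyx] using hy
  set D := {x ∈ E | f x ≠ x}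
  have hDE : D ⊆ E := fun x hx => hx.1
  refine hentangled D f hDE (fun x hx => hf_maps x hx.1) (hf_anti.injOn.mono hDE)
    (Or.inr (hf_anti.antitoneOn.mono hDE)) (fun x hx => hx.2)
    (isStationaryIn_of_subsingleton_diff (fun ξ hξ => hξ.1) ?_)
  have hfix : ∀ ζ ∈ Set.Iio omega1 \ {ξ | ξ < omega1 ∧ e ξ ∈ D}, f (e ζ) = e ζ :=
    fun ζ ⟨hζ, hζD⟩ => not_not.mp fun hne => hζD ⟨hζ, Set.mem_image_of_mem e hζ, hne⟩
  intro ξ hξ η hη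
  exact he hξ.1 hη.1 (hf_anti.eq_of_isFixedPt (Set.mem_image_of_mem e hξ.1)
    (Set.mem_image_of_mem e hη.1) (hfix ξ hξ) (hfix η hη))
end
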